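/- A (2,M,q) code C over Q is a 3-MIPPC(2,M,q) (equivalently, satisfies conditions (I) and (II) of the combinatorial characterization) if and only if the set system (Q, {A¹_0, …, A¹_{q−1}}) is a triangle-free generalized (q,q,K,1) packing, where K = {|A¹_0|,…,|A¹_{q−1}|}; moreover M = |A¹_0| + ⋯ + |A¹_{q−1}|. -/

import Mathlib

/-- The descendant code of a sub-code of a code of length 2, viewed as a set of pairs. -/
def desc2 {q : ℕ} (C' : Finset (Fin q × Fin q)) : Set (Fin q × Fin q) :=
  {x | (∃ c ∈ C', c.1 = x.1) ∧ (∃ c ∈ C', c.2 = x.2)}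

/-- `C` is a `t`-MIPPC of length 2: for every descendant set produced by some nonempty
sub-code of size at most `t`, all such parent sets have a common codeword. -/
def isMIPPC2 {q : ℕ} (t : ℕ) (C : Finset (Fin q × Fin q)) : Prop :=
  ∀ S : Set (Fin q × Fin q),
    (∃ C' : Finset (Fin q × Fin q), C' ⊆ C ∧ C'.Nonempty ∧ C'.card ≤ t ∧ desc2 C' = S) →
    ∃ c, ∀ C' : Finset (Fin q × Fin q),
      C' ⊆ C → C'.Nonempty → C'.card ≤ t → desc2 C' = S → c ∈ C'

/-- `A¹_a = {b : (a,b) ∈ C}`. -/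
def A1 {q : ℕ} (C : Finset (Fin q × Fin q)) (a : Fin q) : Finset (Fin q) :=
  (C.filter (fun c => c.1 = a)).image Prod.snd

/-- Condition (I). -/
def CondI {q : ℕ} (C : Finset (Fin q × Fin q)) : Prop :=
  ∀ a₁ a₂ : Fin q, a₁ ≠ a₂ → (A1 C a₁ ∩ A1 C a₂).card ≤ 1

/-- Condition (II). -/
def CondII {q : ℕ} (C : Finset (Fin q × Fin q)) : Prop :=
  ¬ ∃ a₁ a₂ a₃ b₁ b₂ b₃ : Fin q,
      a₁ ≠ a₂ ∧ a₁ ≠ a₃ ∧ a₂ ≠ a₃ ∧ b₁ ≠ b₂ ∧ b₁ ≠ b₃ ∧ b₂ ≠ b₃ ∧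
      b₁ ∈ A1 C a₁ ∧ b₂ ∈ A1 C a₁ ∧ b₂ ∈ A1 C a₂ ∧ b₃ ∈ A1 C a₂ ∧
      b₁ ∈ A1 C a₃ ∧ b₃ ∈ A1 C a₃

/-- A family of blocks (possibly empty) is a generalized packing with index `λ = 1`:
every pair of distinct points lies in at most one block. -/
def IsGenPacking {ι α : Type*} [DecidableEq α] (B : ι → Finset α) : Prop :=
  ∀ i j : ι, i ≠ j → ∀ x y : α, x ≠ y →
    ¬(x ∈ B i ∧ y ∈ B i ∧ x ∈ B j ∧ y ∈ B j)

/-- The family of blocks is triangle-free: no three distinct points whose three pairs are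
covered by three distinct blocks. -/
def IsTriangleFree {ι α : Type*} [DecidableEq α] (B : ι → Finset α) : Prop :=
  ¬ ∃ (i j k : ι) (x y z : α),
      i ≠ j ∧ i ≠ k ∧ j ≠ k ∧ x ≠ y ∧ x ≠ z ∧ y ≠ z ∧
      x ∈ B i ∧ y ∈ B i ∧ y ∈ B j ∧ z ∈ B j ∧ x ∈ B k ∧ z ∈ B k

/-! Two disjoint sub-codes with the same descendant set witness the failure of the MIPPC
property, and a 4-cycle or a 6-cycle in the incidence graph of the blocks `A¹_a` yields such
a pair. Conversely, if the blocks form a triangle-free packing, fix a parent set `C₀` with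
projections `U` and `V`; every parent set of the same descendant lies in `C ∩ (U × V)` and
covers `U` and `V`. Since `V` has at most three points, a walk in this incidence graph that
never meets a vertex of degree one would close a 4-cycle or a 6-cycle, so some
codeword `(a, b)` is the only one through `a` or through `b`, and every parent set
contains it. -/

open Finset

section Blocks

variable {ι α : Type*} [DecidableEq α]

theorem eq_or_eq_or_eq_of_card_le_three {s : Finset α} (hs : #s ≤ 3) {x y z w : α}
    (hx : x ∈ s) (hy : y ∈ s) (hz : z ∈ s) (hxy : x ≠ y) (hxz : x ≠ z) (hyz : y ≠ z)
    (hw : w ∈ s) : w = x ∨ w = y ∨ w = z := by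
  have hs' : ({x, y, z} : Finset α) = s :=
    eq_of_subset_of_card_le (by simp [insert_subset_iff, hx, hy, hz])
      (hs.trans (card_eq_three.2 ⟨x, y, z, hxy, hxz, hyz, rfl⟩).ge)
  simpa [← hs'] using hw

theorem IsGenPacking.exists_pendant_incidence {B : ι → Finset α} (hP : IsGenPacking B)
    (hT : IsTriangleFree B) {U : Set ι} {V : Finset α} (hV : #V ≤ 3) {i₁ : ι} {x₁ : α}
    (hi₁ : i₁ ∈ U) (hx₁ : x₁ ∈ V) (h₁₁ : x₁ ∈ B i₁) :
    ∃ i ∈ U, ∃ x ∈ V, x ∈ B i ∧ ((∀ j ∈ U, x ∈ B j → j = i) ∨ (∀ y ∈ V, y ∈ B i → y = x)) := by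
  by_contra! hdeg
  obtain ⟨x₂, hx₂, h₁₂, hx₂₁⟩ := (hdeg i₁ hi₁ x₁ hx₁ h₁₁).2
  obtain ⟨i₂, hi₂, h₂₂, hi₂₁⟩ := (hdeg i₁ hi₁ x₂ hx₂ h₁₂).1
  obtain ⟨x₃, hx₃, h₂₃, hx₃₂⟩ := (hdeg i₂ hi₂ x₂ hx₂ h₂₂).2
  have hx₃₁ : x₃ ≠ x₁ := fun h => hP i₁ i₂ hi₂₁.symm x₁ x₂ hx₂₁.symm ⟨h₁₁, h₁₂, h ▸ h₂₃, h₂₂⟩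
  obtain ⟨i₃, hi₃, h₃₃, hi₃₂⟩ := (hdeg i₂ hi₂ x₃ hx₃ h₂₃).1
  have hi₃₁ : i₃ ≠ i₁ := fun h => hP i₁ i₂ hi₂₁.symm x₂ x₃ hx₃₂.symm ⟨h₁₂, h ▸ h₃₃, h₂₂, h₂₃⟩
  obtain ⟨x₄, hx₄, h₃₄, hx₄₃⟩ := (hdeg i₃ hi₃ x₃ hx₃ h₃₃).2
  rcases eq_or_eq_or_eq_of_card_le_three hV hx₁ hx₂ hx₃ hx₂₁.symm hx₃₁.symm hx₃₂.symm hx₄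
    with rfl | rfl | rfl
  · exact hT ⟨i₁, i₂, i₃, x₄, x₂, x₃, hi₂₁.symm, hi₃₁.symm, hi₃₂.symm, hx₂₁.symm, hx₃₁.symm,
      hx₃₂.symm, h₁₁, h₁₂, h₂₂, h₂₃, h₃₄, h₃₃⟩
  · exact hP i₂ i₃ hi₃₂.symm x₄ x₃ hx₃₂.symm ⟨h₂₂, h₂₃, h₃₄, h₃₃⟩
  · exact hx₄₃ rfl

end Blocks

section Codes

variable {q : ℕ}

theorem mem_A1 {C : Finset (Fin q × Fin q)} {a b : Fin q} : b ∈ A1 C a ↔ (a, b) ∈ C := by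
  simp [A1]

theorem desc2_eq_coe_product (D : Finset (Fin q × Fin q)) :
    desc2 D = ↑(D.image Prod.fst ×ˢ D.image Prod.snd) := by
  ext x
  simp [desc2]

theorem image_fst_eq_and_image_snd_eq_of_desc2_eq {D E : Finset (Fin q × Fin q)}
    (hD : D.Nonempty) (h : desc2 D = desc2 E) :
    D.image Prod.fst = E.image Prod.fst ∧ D.image Prod.snd = E.image Prod.snd := by
  rw [desc2_eq_coe_product, desc2_eq_coe_product, coe_product, coe_product,
    Set.prod_eq_prod_iff_of_nonempty (by simpa using hD)] at h
  exact_mod_cast h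

theorem desc2_eq_of_image_eq {D E : Finset (Fin q × Fin q)}
    (h₁ : D.image Prod.fst = E.image Prod.fst) (h₂ : D.image Prod.snd = E.image Prod.snd) :
    desc2 D = desc2 E := by
  rw [desc2_eq_coe_product, desc2_eq_coe_product, h₁, h₂]

theorem not_isMIPPC2_of_disjoint {t : ℕ} {C D E : Finset (Fin q × Fin q)} (hD : D ⊆ C)
    (hE : E ⊆ C) (hDne : D.Nonempty) (hEne : E.Nonempty) (hDt : #D ≤ t) (hEt : #E ≤ t)
    (hDE : desc2 D = desc2 E) (hdisj : Disjoint D E) : ¬ isMIPPC2 t C := by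
  intro hM
  obtain ⟨c, hc⟩ := hM _ ⟨D, hD, hDne, hDt, rfl⟩
  exact disjoint_left.1 hdisj (hc D hD hDne hDt rfl) (hc E hE hEne hEt hDE.symm)

variable {C : Finset (Fin q × Fin q)}

theorem isGenPacking_of_isMIPPC2 (hM : isMIPPC2 3 C) : IsGenPacking (A1 C) := by
  rintro i j hij x y hxy ⟨hix, hiy, hjx, hjy⟩
  rw [mem_A1] at hix hiy hjx hjy
  refine not_isMIPPC2_of_disjoint (D := {(i, x), (j, y)}) (E := {(i, y), (j, x)})
    ?_ ?_ (insert_nonempty _ _) (insert_nonempty _ _) (card_le_two.trans (by norm_num))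
    (card_le_two.trans (by norm_num)) ?_ ?_ hM
  · simp [insert_subset_iff, hix, hjy]
  · simp [insert_subset_iff, hiy, hjx]
  · exact desc2_eq_of_image_eq (by simp) (by simp [pair_comm])
  · simp [hij, hxy, hij.symm, hxy.symm]

theorem isTriangleFree_of_isMIPPC2 (hM : isMIPPC2 3 C) : IsTriangleFree (A1 C) := by
  rintro ⟨i, j, k, x, y, z, hij, hik, hjk, hxy, hxz, hyz, hix, hiy, hjy, hjz, hkx, hkz⟩
  rw [mem_A1] at hix hiy hjy hjz hkx hkz
  refine not_isMIPPC2_of_disjoint (D := {(i, x), (j, y), (k, z)})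
    (E := {(i, y), (j, z), (k, x)}) ?_ ?_ (insert_nonempty _ _) (insert_nonempty _ _)
    card_le_three card_le_three ?_ ?_ hM
  · simp [insert_subset_iff, hix, hjy, hkz]
  · simp [insert_subset_iff, hiy, hjz, hkx]
  · exact desc2_eq_of_image_eq (by simp) (by ext; simp; tauto)
  · simp [hij, hik, hjk, hxy, hxz, hyz, hij.symm, hik.symm, hjk.symm, hxy.symm, hxz.symm,
      hyz.symm]

theorem isMIPPC2_three_of_isGenPacking (hP : IsGenPacking (A1 C))
    (hT : IsTriangleFree (A1 C)) : isMIPPC2 3 C := by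
  rintro S ⟨C₀, hC₀, ⟨c₀, hc₀⟩, hcard, rfl⟩
  obtain ⟨a, ha, b, hb, hab, hpendant⟩ :=
    hP.exists_pendant_incidence hT (U := ↑(C₀.image Prod.fst)) (card_image_le.trans hcard)
      (mem_image_of_mem _ hc₀) (mem_image_of_mem _ hc₀) (mem_A1.2 (hC₀ hc₀))
  refine ⟨(a, b), fun C' hC' hne _ hS => ?_⟩
  obtain ⟨hfst, hsnd⟩ := image_fst_eq_and_image_snd_eq_of_desc2_eq hne hS
  rcases hpendant with hb_only | ha_only
  · obtain ⟨c, hc, rfl⟩ := mem_image.1 (hsnd ▸ hb)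
    obtain rfl : c.1 = a :=
      hb_only c.1 (by simpa [hfst] using mem_image_of_mem Prod.fst hc) (mem_A1.2 (hC' hc))
    exact hc
  · obtain ⟨c, hc, rfl⟩ := mem_image.1 (hfst ▸ ha)
    obtain rfl : c.2 = b :=
      ha_only c.2 (hsnd ▸ mem_image_of_mem Prod.snd hc) (mem_A1.2 (hC' hc))
    exact hc

theorem card_A1 (a : Fin q) : #(A1 C a) = #{c ∈ C | c.1 = a} :=
  card_image_of_injOn fun _ hu _ hv huv =>
    Prod.ext ((mem_filter.1 hu).2.trans (mem_filter.1 hv).2.symm) huv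

end Codes

/-- A `(2,M,q)` code is a 3-MIPPC(2,M,q) iff the family `(A¹_a)_{a ∈ Q}` is a triangle-free
generalized `(q,q,K,1)` packing; moreover `M = |A¹_0| + ⋯ + |A¹_{q−1}|`. -/
theorem mippc3_iff_triangleFree_packing {q : ℕ} (C : Finset (Fin q × Fin q)) :
    (isMIPPC2 3 C ↔ IsGenPacking (A1 C) ∧ IsTriangleFree (A1 C)) ∧
    C.card = ∑ a : Fin q, (A1 C a).card := by
  refine ⟨⟨fun hM => ⟨isGenPacking_of_isMIPPC2 hM, isTriangleFree_of_isMIPPC2 hM⟩,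
    fun h => isMIPPC2_three_of_isGenPacking h.1 h.2⟩, ?_⟩
  simp_rw [card_A1]
  exact card_eq_sum_card_fiberwise fun _ _ => mem_univ _
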